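/- arXiv:1303.6375 — 5 statements merged into one kernel-verified Lean document; each statement's English description precedes it below -/
import Mathlib

section
/- Let θ ∈ A with θ(ℝ) ⊆ [θ_h, π − θ_h] and E(θ) < ∞, and define ρ : ℝ → [θ_h, π/2] by ρ(x) := θ(x) if θ(x) ≤ π/2 and ρ(x) := π − θ(x) otherwise (i.e. ρ = min(θ, π − θ)). Then, with c_h := cos²(π/4 + θ_h/2) > 0, one has E(θ) ≥ (c_h/4)·(∫_ℝ (ρ(x) − θ_h)² dx + ∫_ℝ ρ'(x)² dx) + (ν/(8π))∫_ℝ∫_ℝ (sin ρ(x) − sin ρ(y))²/(x − y)² dx dy. -/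
open MeasureTheory Real Filter Set
open scoped ENNReal NNReal Topology

/-- The one-dimensional Néel wall energy, with values in `[0, ∞]`. -/
noncomputable def neelEnergy (ν h : ℝ) (θ : ℝ → ℝ) : ℝ≥0∞ :=
  (∫⁻ x : ℝ, ENNReal.ofReal ((deriv θ x) ^ 2)) / 2
    + (∫⁻ x : ℝ, ENNReal.ofReal ((Real.sin (θ x) - h) ^ 2)) / 2
    + ENNReal.ofReal (ν / (8 * Real.pi)) *
        ∫⁻ x : ℝ, ∫⁻ y : ℝ,
          ENNReal.ofReal ((Real.sin (θ x) - Real.sin (θ y)) ^ 2 / (x - y) ^ 2)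

/-- `θ` is locally absolutely continuous: its (a.e.) derivative is locally integrable
and the fundamental theorem of calculus holds. -/
def LocAC (θ : ℝ → ℝ) : Prop :=
  MeasureTheory.LocallyIntegrable (deriv θ) MeasureTheory.volume ∧
    ∀ a b : ℝ, θ b - θ a = ∫ t in a..b, deriv θ t

/-- `η` is an admissible reference profile: smooth, nonincreasing, with values in `[0, π]`,
equal to `π - arcsin h` on `(-∞,-1)` and to `arcsin h` on `(1,∞)`. -/
def IsEta (h : ℝ) (η : ℝ → ℝ) : Prop :=
  ContDiff ℝ (⊤ : ℕ∞) η ∧ Antitone η ∧ (∀ x : ℝ, η x ∈ Set.Icc 0 Real.pi) ∧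
    (∀ x : ℝ, x < -1 → η x = Real.pi - Real.arcsin h) ∧
    (∀ x : ℝ, x > 1 → η x = Real.arcsin h)

/-- The admissible class `A`: locally absolutely continuous `θ` with
`θ - η ∈ L²(ℝ)` and `θ' ∈ L²(ℝ)`. -/
def Admissible (h : ℝ) (η θ : ℝ → ℝ) : Prop :=
  LocAC θ ∧ MeasureTheory.MemLp (fun x => θ x - η x) 2 MeasureTheory.volume ∧
    MeasureTheory.MemLp (deriv θ) 2 MeasureTheory.volume

/-- `θ₀` minimizes the Néel wall energy over the admissible class. -/
def IsMinimizer (ν h : ℝ) (η θ₀ : ℝ → ℝ) : Prop :=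
  Admissible h η θ₀ ∧ neelEnergy ν h θ₀ < ⊤ ∧
    ∀ θ : ℝ → ℝ, Admissible h η θ → neelEnergy ν h θ₀ ≤ neelEnergy ν h θ

lemma key_ineq (a r : ℝ) (ha0 : 0 ≤ a) (har : a ≤ r) (hr : r ≤ Real.pi / 2) :
    Real.cos (Real.pi / 4 + a / 2) ^ 2 / 2 * (r - a) ^ 2 ≤ (Real.sin r - Real.sin a) ^ 2 := by
  have hpi := Real.pi_gt_three
  have hpi' := Real.pi_lt_d2
  set d := (r - a) / 2 with hd
  set m := (r + a) / 2 with hm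
  have hsub : Real.sin r - Real.sin a = 2 * Real.sin d * Real.cos m := Real.sin_sub_sin r a
  have hd0 : 0 ≤ d := by rw [hd]; linarith
  have hd4 : d ≤ Real.pi / 4 := by rw [hd]; linarith
  have hm0 : 0 ≤ m := by rw [hm]; linarith
  have hmle : m ≤ Real.pi / 4 + a / 2 := by rw [hm]; linarith
  have hble : Real.pi / 4 + a / 2 ≤ Real.pi := by linarith
  have hc1 : Real.cos (Real.pi / 4 + a / 2) ≤ Real.cos m :=
    Real.cos_le_cos_of_nonneg_of_le_pi hm0 hble hmle
  have hc0 : 0 ≤ Real.cos m := by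
    apply Real.cos_nonneg_of_mem_Icc
    constructor
    · linarith
    · rw [hm]; linarith
  have hb0 : 0 ≤ Real.cos (Real.pi / 4 + a / 2) := by
    apply Real.cos_nonneg_of_mem_Icc
    constructor <;> linarith
  have hsd0 : 0 ≤ Real.sin d := Real.sin_nonneg_of_nonneg_of_le_pi hd0 (by linarith)
  have hsq : d ^ 2 ≤ 2 * Real.sin d ^ 2 := by
    rcases eq_or_lt_of_le hd0 with h0 | h0
    · simp [← h0]
    · have hd1 : d ≤ 1 := by linarith
      have h2 : d - d ^ 3 / 4 ≤ Real.sin d := by linarith [Real.sin_gt_sub_cube h0, pow_pos h0 3]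
      have hd2 : d ^ 2 ≤ 1 := by nlinarith
      have h3 : (0:ℝ) ≤ d - d ^ 3 / 4 := by nlinarith [mul_nonneg h0.le (sub_nonneg.2 hd2)]
      have h4 : (d - d ^ 3 / 4) ^ 2 ≤ Real.sin d ^ 2 := by nlinarith
      nlinarith [sq_nonneg (d ^ 3), mul_nonneg (sq_nonneg d) (sub_nonneg.2 hd2)]
  have hcc : Real.cos (Real.pi / 4 + a / 2) ^ 2 ≤ Real.cos m ^ 2 := by nlinarith
  have h5 : (r - a) ^ 2 = 4 * d ^ 2 := by rw [hd]; ring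
  rw [hsub, h5]
  nlinarith [mul_le_mul_of_nonneg_left hsq (sq_nonneg (Real.cos m)),
    mul_le_mul_of_nonneg_right hcc (sq_nonneg d)]

/-- coercivity lower bound for the energy in terms of the folded profile
`ρ = min(θ, π - θ)`, with `c_h = cos²(π/4 + θ_h/2) > 0`. -/
theorem neel_energy_coercivity (ν h : ℝ) (hν : 0 < ν) (hh : h ∈ Set.Ico (0 : ℝ) 1)
    (η : ℝ → ℝ) (hη : IsEta h η) (θ : ℝ → ℝ) (hθ : Admissible h η θ)
    (hrange : ∀ x : ℝ, θ x ∈ Set.Icc (Real.arcsin h) (Real.pi - Real.arcsin h))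
    (hfin : neelEnergy ν h θ < ⊤)
    (ρ : ℝ → ℝ) (hρ : ∀ x : ℝ, ρ x = min (θ x) (Real.pi - θ x)) :
    0 < Real.cos (Real.pi / 4 + Real.arcsin h / 2) ^ 2 ∧
      ENNReal.ofReal (Real.cos (Real.pi / 4 + Real.arcsin h / 2) ^ 2 / 4) *
          ((∫⁻ x : ℝ, ENNReal.ofReal ((ρ x - Real.arcsin h) ^ 2))
            + ∫⁻ x : ℝ, ENNReal.ofReal ((deriv ρ x) ^ 2))
        + ENNReal.ofReal (ν / (8 * Real.pi)) *
            ∫⁻ x : ℝ, ∫⁻ y : ℝ,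
              ENNReal.ofReal ((Real.sin (ρ x) - Real.sin (ρ y)) ^ 2 / (x - y) ^ 2)
        ≤ neelEnergy ν h θ := by
  obtain ⟨hh0, hh1⟩ := hh
  have hpi := Real.pi_pos
  set a := Real.arcsin h with ha
  have ha0 : 0 ≤ a := Real.arcsin_nonneg.2 hh0
  have ha2 : a < Real.pi / 2 := Real.arcsin_lt_pi_div_two.2 hh1
  have hsina : Real.sin a = h := Real.sin_arcsin (by linarith) hh1.le
  set c := Real.cos (Real.pi / 4 + a / 2) ^ 2 with hc
  have hcpos : 0 < c := by
    have : 0 < Real.cos (Real.pi / 4 + a / 2) :=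
      Real.cos_pos_of_mem_Ioo ⟨by linarith, by linarith⟩
    positivity
  refine ⟨hcpos, ?_⟩
  have hc1 : c ≤ 1 := Real.cos_sq_le_one _
  -- bounds on ρ
  have hρb : ∀ x, a ≤ ρ x ∧ ρ x ≤ Real.pi / 2 := by
    intro x
    obtain ⟨h1, h2⟩ := hrange x
    rw [hρ x]
    constructor
    · exact le_min h1 (by linarith)
    · rcases le_total (θ x) (Real.pi / 2) with hcs | hcs
      · exact (min_le_left _ _).trans hcs
      · exact (min_le_right _ _).trans (by linarith)
  have hsin : ∀ x, Real.sin (ρ x) = Real.sin (θ x) := by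
    intro x
    rw [hρ x]
    rcases le_total (θ x) (Real.pi - θ x) with hle | hle
    · rw [min_eq_left hle]
    · rw [min_eq_right hle, Real.sin_pi_sub]
  -- continuity of θ
  have hInt : ∀ p q : ℝ, IntervalIntegrable (deriv θ) volume p q := fun p q =>
    (hθ.1.1.integrableOn_isCompact isCompact_uIcc).intervalIntegrable
  have hcont : Continuous θ := by
    have h1 : Continuous fun b => ∫ t in (0:ℝ)..b, deriv θ t :=
      intervalIntegral.continuous_primitive hInt 0
    have h2 : θ = fun b => θ 0 + ∫ t in (0:ℝ)..b, deriv θ t := by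
      funext b
      have := hθ.1.2 0 b
      linarith
    rw [h2]
    exact continuous_const.add h1
  -- pointwise derivative bound
  have hderiv : ∀ x, (deriv ρ x) ^ 2 ≤ (deriv θ x) ^ 2 := by
    intro x
    rcases lt_trichotomy (θ x) (Real.pi / 2) with hlt | heq | hgt
    · have hev : ρ =ᶠ[𝓝 x] θ := by
        filter_upwards [(hcont.continuousAt).eventually_lt_const hlt] with y hy
        rw [hρ y, min_eq_left (by linarith)]
      rw [hev.deriv_eq]
    · have hmax : IsLocalMax ρ x := by
        apply Filter.Eventually.of_forall
        intro y
        have h1 := (hρb y).2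
        have h2 : ρ x = Real.pi / 2 := by
          rw [hρ x, heq, show Real.pi - Real.pi / 2 = Real.pi / 2 by ring, min_self]
        rw [h2]; exact h1
      rw [hmax.deriv_eq_zero]
      simpa using sq_nonneg (deriv θ x)
    · have hev : ρ =ᶠ[𝓝 x] fun y => Real.pi - θ y := by
        filter_upwards [(hcont.continuousAt).eventually_const_lt hgt] with y hy
        rw [hρ y, min_eq_right (by linarith)]
      rw [hev.deriv_eq, deriv_const_sub]
      rw [neg_pow]
      simp
  -- ENNReal half
  have h2inv : ENNReal.ofReal ((2:ℝ)⁻¹) = 2⁻¹ := by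
    rw [ENNReal.ofReal_inv_of_pos (by norm_num : (0:ℝ) < 2)]
    norm_num
  -- first term bound
  have hJ1 : ENNReal.ofReal (c / 4) * (∫⁻ x : ℝ, ENNReal.ofReal ((ρ x - a) ^ 2))
      ≤ (∫⁻ x : ℝ, ENNReal.ofReal ((Real.sin (θ x) - h) ^ 2)) / 2 := by
    rw [← lintegral_const_mul' _ _ ENNReal.ofReal_ne_top]
    have hstep : ∀ x : ℝ, ENNReal.ofReal (c / 4) * ENNReal.ofReal ((ρ x - a) ^ 2)
        ≤ ENNReal.ofReal ((2:ℝ)⁻¹) * ENNReal.ofReal ((Real.sin (θ x) - h) ^ 2) := by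
      intro x
      rw [← ENNReal.ofReal_mul (by positivity), ← ENNReal.ofReal_mul (by norm_num)]
      apply ENNReal.ofReal_le_ofReal
      have hk := key_ineq a (ρ x) ha0 (hρb x).1 (hρb x).2
      rw [← hc] at hk
      have : (Real.sin (ρ x) - Real.sin a) ^ 2 = (Real.sin (θ x) - h) ^ 2 := by
        rw [hsin x, hsina]
      rw [this] at hk
      linarith
    calc (∫⁻ x : ℝ, ENNReal.ofReal (c / 4) * ENNReal.ofReal ((ρ x - a) ^ 2))
        ≤ ∫⁻ x : ℝ, ENNReal.ofReal ((2:ℝ)⁻¹) * ENNReal.ofReal ((Real.sin (θ x) - h) ^ 2) :=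
          lintegral_mono hstep
      _ = ENNReal.ofReal ((2:ℝ)⁻¹) * ∫⁻ x : ℝ, ENNReal.ofReal ((Real.sin (θ x) - h) ^ 2) :=
          lintegral_const_mul' _ _ ENNReal.ofReal_ne_top
      _ = (∫⁻ x : ℝ, ENNReal.ofReal ((Real.sin (θ x) - h) ^ 2)) / 2 := by
          rw [h2inv, ENNReal.div_eq_inv_mul]
  -- second term bound
  have hJ2 : ENNReal.ofReal (c / 4) * (∫⁻ x : ℝ, ENNReal.ofReal ((deriv ρ x) ^ 2))
      ≤ (∫⁻ x : ℝ, ENNReal.ofReal ((deriv θ x) ^ 2)) / 2 := by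
    have hmono : (∫⁻ x : ℝ, ENNReal.ofReal ((deriv ρ x) ^ 2))
        ≤ ∫⁻ x : ℝ, ENNReal.ofReal ((deriv θ x) ^ 2) :=
      lintegral_mono fun x => ENNReal.ofReal_le_ofReal (hderiv x)
    have hcle : ENNReal.ofReal (c / 4) ≤ 2⁻¹ := by
      rw [← h2inv]
      exact ENNReal.ofReal_le_ofReal (by linarith)
    calc ENNReal.ofReal (c / 4) * (∫⁻ x : ℝ, ENNReal.ofReal ((deriv ρ x) ^ 2))
        ≤ 2⁻¹ * ∫⁻ x : ℝ, ENNReal.ofReal ((deriv θ x) ^ 2) := mul_le_mul' hcle hmono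
      _ = (∫⁻ x : ℝ, ENNReal.ofReal ((deriv θ x) ^ 2)) / 2 :=
          (ENNReal.div_eq_inv_mul).symm
  -- nonlocal term equality
  have hK : (∫⁻ x : ℝ, ∫⁻ y : ℝ,
        ENNReal.ofReal ((Real.sin (ρ x) - Real.sin (ρ y)) ^ 2 / (x - y) ^ 2))
      = ∫⁻ x : ℝ, ∫⁻ y : ℝ,
        ENNReal.ofReal ((Real.sin (θ x) - Real.sin (θ y)) ^ 2 / (x - y) ^ 2) := by
    simp only [hsin]
  rw [neelEnergy, hK, mul_add]
  apply add_le_add_left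
  calc ENNReal.ofReal (c / 4) * (∫⁻ x : ℝ, ENNReal.ofReal ((ρ x - a) ^ 2))
        + ENNReal.ofReal (c / 4) * (∫⁻ x : ℝ, ENNReal.ofReal ((deriv ρ x) ^ 2))
      ≤ (∫⁻ x : ℝ, ENNReal.ofReal ((Real.sin (θ x) - h) ^ 2)) / 2
        + (∫⁻ x : ℝ, ENNReal.ofReal ((deriv θ x) ^ 2)) / 2 := add_le_add hJ1 hJ2
    _ = (∫⁻ x : ℝ, ENNReal.ofReal ((deriv θ x) ^ 2)) / 2
        + (∫⁻ x : ℝ, ENNReal.ofReal ((Real.sin (θ x) - h) ^ 2)) / 2 := add_comm _ _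
end

section
/- Let h ∈ [0, 1) and θ_h := arcsin h ∈ [0, π/2). Then for every ρ ∈ [θ_h, π/2] one has sin ρ − h ≥ (cos(π/4 + θ_h/2)/√2)·(ρ − θ_h). -/
/-!
Write `x = π/2 - θ`, so that `cos x = sin θ` and `sin (x/2) = cos (π/4 + θ/2)`. Concavity of `sin`
on `[θ, π/2]` bounds `sin ρ - sin θ` below by the chord, of slope `(1 - cos x)/x = 2 sin² (x/2)/x`.
Concavity on `[0, π/4]` gives `sin (x/2) ≥ (x/2)/√2`, because `sin (π/4) = 1/√2 ≥ (π/4)/√2`;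
so the slope is at least `sin (x/2)/√2`.
-/

open Real

theorem ConcaveOn.chord_le {s : Set ℝ} {f : ℝ → ℝ} (hf : ConcaveOn ℝ s f) {x y z : ℝ}
    (hx : x ∈ s) (hz : z ∈ s) (hxy : x ≤ y) (hyz : y ≤ z) :
    (z - y) * f x + (y - x) * f z ≤ (z - x) * f y := by
  rcases hxy.eq_or_lt with rfl | hxy
  · linarith
  rcases hyz.eq_or_lt with rfl | hyz
  · linarith
  have := hf.neg.secant_mono_aux1 hx hz hxy hyz
  simp only [Pi.neg_apply] at this
  linarith

namespace Real

theorem div_sqrt_two_le_sin {x : ℝ} (hx₀ : 0 ≤ x) (hx : x ≤ π / 4) : x / √2 ≤ sin x := by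
  have hchord := strictConcaveOn_sin_Icc.concaveOn.chord_le (x := 0) (y := x) (z := π / 4)
    ⟨le_rfl, pi_pos.le⟩ ⟨by positivity, by linarith [pi_pos]⟩ hx₀ hx
  rw [sin_zero, sin_pi_div_four] at hchord
  have hsqrt : √2 * √2 = 2 := mul_self_sqrt zero_le_two
  have hπ : π * x ≤ π * (sin x * √2) :=
    calc π * x ≤ 4 * x := mul_le_mul_of_nonneg_right pi_le_four hx₀
      _ ≤ π * (sin x * √2) := by
        nlinarith [mul_le_mul_of_nonneg_right hchord (by positivity : (0 : ℝ) ≤ 4 * √2)]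
  rw [div_le_iff₀ (by positivity)]
  exact le_of_mul_le_mul_left hπ pi_pos

theorem mul_sin_half_div_sqrt_two_le_one_sub_cos {x : ℝ} (hx₀ : 0 ≤ x) (hx : x ≤ π / 2) :
    x * (sin (x / 2) / √2) ≤ 1 - cos x := by
  have hsin : x / 2 / √2 ≤ sin (x / 2) := div_sqrt_two_le_sin (by positivity) (by linarith)
  have hsin₀ : 0 ≤ sin (x / 2) := sin_nonneg_of_nonneg_of_le_pi (by positivity) (by linarith)
  have hcos : cos x = 1 - 2 * sin (x / 2) ^ 2 := by
    rw [← cos_two_mul_eq_one_sub, mul_div_cancel₀ _ two_ne_zero]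
  calc x * (sin (x / 2) / √2) = 2 * (sin (x / 2) * (x / 2 / √2)) := by ring
    _ ≤ 2 * (sin (x / 2) * sin (x / 2)) := by gcongr
    _ = 1 - cos x := by rw [hcos]; ring

theorem cos_pi_div_four_add_half_div_sqrt_two_mul_le_sin_sub_sin {θ ρ : ℝ} (hθ₀ : 0 ≤ θ)
    (hθρ : θ ≤ ρ) (hρ : ρ ≤ π / 2) :
    cos (π / 4 + θ / 2) / √2 * (ρ - θ) ≤ sin ρ - sin θ := by
  have hx₀ : 0 ≤ π / 2 - θ := by linarith
  have hslope := mul_sin_half_div_sqrt_two_le_one_sub_cos hx₀ (by linarith)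
  rw [cos_pi_div_two_sub, ← cos_pi_div_two_sub,
    show π / 2 - (π / 2 - θ) / 2 = π / 4 + θ / 2 by ring] at hslope
  have hchord := strictConcaveOn_sin_Icc.concaveOn.chord_le ⟨hθ₀, by linarith [pi_pos]⟩
    ⟨pi_div_two_pos.le, by linarith [pi_pos]⟩ hθρ hρ
  rw [sin_pi_div_two] at hchord
  rcases hx₀.eq_or_lt with hx₀ | hx₀
  · obtain rfl : ρ = θ := by linarith
    simp
  refine le_of_mul_le_mul_left ?_ hx₀
  linear_combination hchord + (ρ - θ) * hslope

end Real

/-- for `h ∈ [0,1)`, `θ_h = arcsin h` and every `ρ ∈ [θ_h, π/2]`,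
`sin ρ - h ≥ (cos(π/4 + θ_h/2)/√2) (ρ - θ_h)`. -/
theorem sin_sub_ge_linear (h : ℝ) (hh : h ∈ Set.Ico (0 : ℝ) 1) (ρ : ℝ)
    (hρ : ρ ∈ Set.Icc (Real.arcsin h) (Real.pi / 2)) :
    Real.sin ρ - h ≥
      Real.cos (Real.pi / 4 + Real.arcsin h / 2) / Real.sqrt 2 * (ρ - Real.arcsin h) := by
  have hsin : sin (arcsin h) = h := sin_arcsin (by linarith [hh.1]) hh.2.le
  simpa only [hsin] using cos_pi_div_four_add_half_div_sqrt_two_mul_le_sin_sub_sin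
    (arcsin_nonneg.mpr hh.1) hρ.1 hρ.2
end

section
/- (Truncation step.) Let θ ∈ A with θ(ℝ) ⊆ [0, π] and E(θ) < ∞, and define the truncation θ̃(x) := max(θ_h, min(θ(x), π − θ_h)) for every x ∈ ℝ. Then θ̃ ∈ A and E(θ̃) ≤ E(θ), with strict inequality E(θ̃) < E(θ) unless θ(ℝ) ⊆ [θ_h, π − θ_h]. -/
set_option maxHeartbeats 1000000


open MeasureTheory Real Filter Set
open scoped ENNReal NNReal Topology

lemma locInt.intervalIntegrable {g : ℝ → ℝ} (hg : LocallyIntegrable g volume) (a b : ℝ) :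
    IntervalIntegrable g volume a b := by
  rw [intervalIntegrable_iff]
  exact (hg.integrableOn_isCompact isCompact_uIcc).mono_set Ioc_subset_Icc_self

lemma aux_cont (θ : ℝ → ℝ) (hLI : LocallyIntegrable (deriv θ) volume)
    (hFTC : ∀ a b : ℝ, θ b - θ a = ∫ t in a..b, deriv θ t) : Continuous θ := by
  have h : Continuous fun b => ∫ t in (0:ℝ)..b, deriv θ t :=
    intervalIntegral.continuous_primitive (fun a b => locInt.intervalIntegrable hLI a b) 0
  have : θ = fun b => θ 0 + ∫ t in (0:ℝ)..b, deriv θ t := by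
    funext b; have := hFTC 0 b; linarith
  rw [this]; exact continuous_const.add h

lemma aux_acc (A : Set ℝ) (hA : MeasurableSet A) :
    ∀ᵐ x : ℝ, x ∈ A → (𝓝[A \ {x}] x).NeBot := by
  filter_upwards [Besicovitch.ae_tendsto_measure_inter_div_of_measurableSet volume hA] with x hx hxA
  rw [mem_closure_iff_nhdsWithin_neBot.symm]
  rw [Metric.mem_closure_iff]
  intro ε hε
  have h1 : Tendsto (fun r => volume (A ∩ Metric.closedBall x r) / volume (Metric.closedBall x r))
      (𝓝[>] 0) (𝓝 1) := by simpa [indicator_of_mem hxA] using hx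
  have h2 : ∀ᶠ r in 𝓝[>] (0:ℝ),
      (1:ℝ≥0∞)/2 < volume (A ∩ Metric.closedBall x r) / volume (Metric.closedBall x r) :=
    h1.eventually_const_lt (by norm_num)
  have h3 : Ioo (0:ℝ) ε ∈ 𝓝[>] (0:ℝ) := Ioo_mem_nhdsGT_of_mem ⟨le_refl _, hε⟩
  obtain ⟨r, hr1, hr2⟩ := (h2.and (eventually_of_mem h3 (fun y hy => hy))).exists
  have hpos : volume ((A ∩ Metric.closedBall x r) \ {x}) ≠ 0 := by
    rw [measure_diff_null (measure_singleton x)]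
    intro h0
    rw [h0] at hr1
    simp at hr1
  obtain ⟨b, hb⟩ := nonempty_of_measure_ne_zero hpos
  refine ⟨b, ⟨hb.1.1, hb.2⟩, ?_⟩
  have : dist b x ≤ r := hb.1.2
  rw [dist_comm]; linarith [hr2.2]


section trig
variable {h : ℝ}

lemma arcsin_facts (hh : h ∈ Set.Ico (0:ℝ) 1) : 0 ≤ arcsin h ∧ arcsin h < π/2 ∧ Real.sin (arcsin h) = h := by
  refine ⟨arcsin_nonneg.2 hh.1, ?_, Real.sin_arcsin (by linarith [hh.1]) hh.2.le⟩
  exact Real.arcsin_lt_pi_div_two.2 hh.2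

lemma sin_eq_sin_min (u : ℝ) (hu : u ∈ Set.Icc 0 π) : Real.sin u = Real.sin (min u (π - u)) := by
  rcases le_total u (π - u) with h1 | h1
  · rw [min_eq_left h1]
  · rw [min_eq_right h1, Real.sin_pi_sub]

lemma sin_ge_of_mem (hh : h ∈ Set.Ico (0:ℝ) 1) (u : ℝ) (hu : u ∈ Set.Icc 0 π)
    (hmem : u ∈ Set.Icc (arcsin h) (π - arcsin h)) : h ≤ Real.sin u := by
  obtain ⟨h0, hlt, hsin⟩ := arcsin_facts hh
  have hm : arcsin h ≤ min u (π - u) := le_min hmem.1 (by linarith [hmem.2])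
  have hm2 : min u (π - u) ≤ π/2 := by
    rcases le_total u (π - u) with h1 | h1
    · rw [min_eq_left h1]; linarith
    · rw [min_eq_right h1]; linarith
  rw [sin_eq_sin_min u hu, ← hsin]
  exact Real.strictMonoOn_sin.monotoneOn ⟨by linarith, by linarith⟩ ⟨by linarith, hm2⟩ hm

lemma sin_lt_of_not_mem (hh : h ∈ Set.Ico (0:ℝ) 1) (u : ℝ) (hu : u ∈ Set.Icc 0 π)
    (hmem : u ∉ Set.Icc (arcsin h) (π - arcsin h)) : Real.sin u < h := by
  obtain ⟨h0, hlt, hsin⟩ := arcsin_facts hh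
  have hm : min u (π - u) < arcsin h := by
    rcases not_and_or.1 (fun hc => hmem ⟨hc.1, hc.2⟩) with h1 | h1
    · push_neg at h1; exact lt_of_le_of_lt (min_le_left _ _) h1
    · push_neg at h1; exact lt_of_le_of_lt (min_le_right _ _) (by linarith)
  have hm0 : 0 ≤ min u (π - u) := le_min hu.1 (by linarith [hu.2])
  rw [sin_eq_sin_min u hu, ← hsin]
  exact Real.strictMonoOn_sin ⟨by linarith, by linarith⟩ ⟨by linarith, by linarith⟩ hm

lemma clamp_cases (hh : h ∈ Set.Ico (0:ℝ) 1) (u : ℝ) :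
    (u < arcsin h → max (arcsin h) (min u (π - arcsin h)) = arcsin h) ∧
    (π - arcsin h < u → max (arcsin h) (min u (π - arcsin h)) = π - arcsin h) ∧
    (u ∈ Set.Icc (arcsin h) (π - arcsin h) → max (arcsin h) (min u (π - arcsin h)) = u) := by
  obtain ⟨h0, hlt, hsin⟩ := arcsin_facts hh
  have hpi := Real.pi_pos
  refine ⟨fun h1 => ?_, fun h1 => ?_, fun h1 => ?_⟩
  · rw [min_eq_left (by linarith), max_eq_left (by linarith)]
  · rw [min_eq_right (by linarith), max_eq_right (by linarith)]
  · rw [min_eq_left h1.2, max_eq_right h1.1]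

lemma sin_clamp (hh : h ∈ Set.Ico (0:ℝ) 1) (u : ℝ) (hu : u ∈ Set.Icc 0 π) :
    Real.sin (max (arcsin h) (min u (π - arcsin h))) = max h (Real.sin u) := by
  obtain ⟨h0, hlt, hsin⟩ := arcsin_facts hh
  obtain ⟨hc1, hc2, hc3⟩ := clamp_cases hh u
  by_cases hmem : u ∈ Set.Icc (arcsin h) (π - arcsin h)
  · rw [hc3 hmem, max_eq_right (sin_ge_of_mem hh u hu hmem)]
  · have hs := sin_lt_of_not_mem hh u hu hmem
    rw [max_eq_left hs.le]
    rcases not_and_or.1 (fun hc => hmem ⟨hc.1, hc.2⟩) with h1 | h1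
    · push_neg at h1; rw [hc1 h1, hsin]
    · push_neg at h1; rw [hc2 h1, Real.sin_pi_sub, hsin]

end trig


lemma aux_subst_le (θ : ℝ → ℝ) (hθc : Continuous θ) (hLI : LocallyIntegrable (deriv θ) volume)
    (hFTC : ∀ a b : ℝ, θ b - θ a = ∫ t in a..b, deriv θ t)
    (F' : ℝ → ℝ) (hF'c : Continuous F') (a b : ℝ) (hab : a ≤ b) :
    (∫ s in (θ a)..(θ b), F' s) = ∫ t in a..b, F' (θ t) * deriv θ t := by
  set g := deriv θ with hg
  set L := ∫ s in (θ a)..(θ b), F' s with hL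
  set R := ∫ t in a..b, F' (θ t) * deriv θ t with hR
  set C := ∫ t in a..b, |g t| with hC
  have hC0 : 0 ≤ C := intervalIntegral.integral_nonneg hab (fun t _ => abs_nonneg _)
  -- integrability of the composed integrand on any interval
  have hint : ∀ p q : ℝ, IntervalIntegrable (fun t => F' (θ t) * g t) volume p q := fun p q =>
    (locInt.intervalIntegrable hLI p q).continuousOn_mul (hF'c.comp hθc).continuousOn
  -- bound on θ over [a,b]
  obtain ⟨M, hM⟩ := isCompact_Icc.exists_bound_of_continuousOn (s := Icc a b) hθc.continuousOn
  have key : ∀ ε : ℝ, 0 < ε → |L - R| ≤ ε * (2 * C) := by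
    intro ε hε
    -- uniform continuity of F' on [-M, M]
    obtain ⟨δ, hδ0, hδ⟩ := (Metric.uniformContinuousOn_iff.1
      ((isCompact_Icc (a := -M) (b := M)).uniformContinuousOn_of_continuous
        hF'c.continuousOn)) ε hε
    -- uniform continuity of θ on [a,b]
    obtain ⟨δθ, hδθ0, hδθ⟩ := (Metric.uniformContinuousOn_iff.1
      ((isCompact_Icc (a := a) (b := b)).uniformContinuousOn_of_continuous
        hθc.continuousOn)) δ hδ0
    obtain ⟨n, hn⟩ := exists_nat_gt ((b - a) / δθ)
    have hn0 : 0 < (n : ℝ) := lt_of_le_of_lt (div_nonneg (by linarith) hδθ0.le) hn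
    set s := (b - a) / n with hs
    have hs0 : 0 ≤ s := div_nonneg (by linarith) hn0.le
    have hsδ : s < δθ := by
      rw [hs, div_lt_iff₀ hn0]
      calc b - a = ((b-a)/δθ) * δθ := by field_simp
      _ < n * δθ := by exact mul_lt_mul_of_pos_right hn hδθ0
      _ = δθ * n := mul_comm _ _
    set x : ℕ → ℝ := fun i => a + i * s with hx
    have hx0 : x 0 = a := by simp [hx]
    have hxn : x n = b := by
      simp only [hx, hs]; field_simp; ring
    have hstep : ∀ i : ℕ, x (i+1) - x i = s := by
      intro i; simp only [hx]; push_cast; ring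
    have hxmono : ∀ i : ℕ, x i ≤ x (i+1) := by
      intro i; nlinarith [hstep i]
    have hxmem : ∀ i : ℕ, i ≤ n → x i ∈ Icc a b := by
      intro i hi
      constructor
      · simp only [hx]; nlinarith [Nat.cast_nonneg (α := ℝ) i]
      · have : (i : ℝ) * s ≤ n * s := by
          apply mul_le_mul_of_nonneg_right _ hs0; exact_mod_cast hi
        simp only [hx]
        have : a + i * s ≤ a + n * s := by linarith
        calc a + i*s ≤ a + n * s := this
        _ = b := by rw [hs]; field_simp; ring
    -- telescoping
    have hLsum : L = ∑ i ∈ Finset.range n, ∫ u in (θ (x i))..(θ (x (i+1))), F' u := by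
      rw [hL, ← hx0, ← hxn]
      exact (intervalIntegral.sum_integral_adjacent_intervals (a := fun i => θ (x i))
        (μ := volume) (f := F') (n := n) (fun k _ => hF'c.intervalIntegrable _ _)).symm
    have hRsum : R = ∑ i ∈ Finset.range n, ∫ t in (x i)..(x (i+1)), F' (θ t) * g t := by
      rw [hR, ← hx0, ← hxn]
      exact (intervalIntegral.sum_integral_adjacent_intervals (a := x) (μ := volume)
        (f := fun t => F' (θ t) * g t) (n := n) (fun k _ => hint _ _)).symm
    have hCsum : C = ∑ i ∈ Finset.range n, ∫ t in (x i)..(x (i+1)), |g t| := by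
      rw [hC, ← hx0, ← hxn]
      exact (intervalIntegral.sum_integral_adjacent_intervals (a := x) (μ := volume)
        (f := fun t => |g t|) (n := n) (fun k _ => (locInt.intervalIntegrable hLI _ _).abs)).symm
    -- per-interval estimate
    have hpiece : ∀ i : ℕ, i < n →
        |(∫ u in (θ (x i))..(θ (x (i+1))), F' u) - ∫ t in (x i)..(x (i+1)), F' (θ t) * g t|
          ≤ ε * (2 * ∫ t in (x i)..(x (i+1)), |g t|) := by
      intro i hi
      set p := x i with hp
      set q := x (i+1) with hq
      have hpq : p ≤ q := hxmono i
      have hpmem : p ∈ Icc a b := hxmem i hi.le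
      have hqmem : q ∈ Icc a b := hxmem (i+1) hi
      have hqp : q - p < δθ := by rw [hp, hq, hstep i]; exact hsδ
      have hθpq : |θ q - θ p| < δ := by
        have := hδθ q hqmem p hpmem (by rw [Real.dist_eq]; rw [abs_of_nonneg (by linarith)]; linarith)
        rwa [Real.dist_eq] at this
      have hFTCpq : θ q - θ p = ∫ t in p..q, g t := hFTC p q
      have habs : |θ q - θ p| ≤ ∫ t in p..q, |g t| := by
        rw [hFTCpq]
        exact intervalIntegral.abs_integral_le_integral_abs hpq
      have hIg0 : 0 ≤ ∫ t in p..q, |g t| :=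
        intervalIntegral.integral_nonneg hpq (fun t _ => abs_nonneg _)
      -- first piece
      have hA1 : |∫ u in (θ p)..(θ q), (F' u - F' (θ p))| ≤ ε * ∫ t in p..q, |g t| := by
        have hb1 : ∀ u ∈ uIoc (θ p) (θ q), ‖F' u - F' (θ p)‖ ≤ ε := by
          intro u hu
          have hu' : u ∈ uIcc (θ p) (θ q) := uIoc_subset_uIcc hu
          rw [mem_uIcc] at hu'
          have hub : |u - θ p| ≤ |θ q - θ p| := by
            rcases hu' with ⟨h1, h2⟩ | ⟨h1, h2⟩
            · rw [abs_of_nonneg (by linarith), abs_of_nonneg (by linarith)]; linarith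
            · rw [abs_of_nonpos (by linarith), abs_of_nonpos (by linarith)]; linarith
          have hpM : |θ p| ≤ M := hM p hpmem
          have hqM : |θ q| ≤ M := hM q hqmem
          have huM : u ∈ Icc (-M) M := by
            rw [abs_le] at hpM hqM
            rcases hu' with ⟨h1, h2⟩ | ⟨h1, h2⟩ <;>
              exact ⟨by linarith, by linarith⟩
          have := hδ u huM (θ p) (by rw [abs_le] at hpM; exact ⟨by linarith [hpM.1], hpM.2⟩)
            (by rw [Real.dist_eq]; linarith [hub.trans_lt hθpq])
          rw [Real.dist_eq] at this
          exact this.le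
        calc |∫ u in (θ p)..(θ q), (F' u - F' (θ p))| ≤ ε * |θ q - θ p| :=
          intervalIntegral.norm_integral_le_of_norm_le_const hb1
        _ ≤ ε * ∫ t in p..q, |g t| := by
          exact mul_le_mul_of_nonneg_left habs hε.le
      -- second piece
      have hA2 : |∫ t in p..q, (F' (θ t) - F' (θ p)) * g t| ≤ ε * ∫ t in p..q, |g t| := by
        have hb2 : ∀ᵐ t ∂(volume.restrict (uIoc p q)), ‖(F' (θ t) - F' (θ p)) * g t‖ ≤ ε * |g t| := by
          refine (ae_restrict_iff' measurableSet_uIoc).2 (Eventually.of_forall ?_)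
          intro t ht
          rw [uIoc_of_le hpq] at ht
          have htmem : t ∈ Icc a b := ⟨le_trans hpmem.1 ht.1.le, le_trans ht.2 hqmem.2⟩
          have hdist : |θ t - θ p| < δ := by
            have := hδθ t htmem p hpmem
              (by rw [Real.dist_eq, abs_of_nonneg (by linarith [ht.1.le])]; linarith [ht.2])
            rwa [Real.dist_eq] at this
          have hF : |F' (θ t) - F' (θ p)| ≤ ε := by
            have htM : |θ t| ≤ M := hM t htmem
            have hpM : |θ p| ≤ M := hM p hpmem
            have := hδ (θ t) (abs_le.1 htM |> fun h => ⟨by linarith [h.1], h.2⟩)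
              (θ p) (abs_le.1 hpM |> fun h => ⟨by linarith [h.1], h.2⟩)
              (by rw [Real.dist_eq]; exact hdist)
            rw [Real.dist_eq] at this
            exact this.le
          rw [norm_mul, Real.norm_eq_abs, Real.norm_eq_abs]
          exact mul_le_mul_of_nonneg_right hF (abs_nonneg _)
        have := intervalIntegral.norm_integral_le_abs_of_norm_le hb2
          (((locInt.intervalIntegrable hLI p q).abs).const_mul ε)
        rw [Real.norm_eq_abs] at this
        refine this.trans ?_
        rw [intervalIntegral.integral_const_mul]
        rw [abs_of_nonneg (by positivity)]
      -- algebraic identity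
      have hId : (∫ u in (θ (x i))..(θ (x (i+1))), F' u) - (∫ t in (x i)..(x (i+1)), F' (θ t) * g t)
          = (∫ u in (θ p)..(θ q), (F' u - F' (θ p)))
            - ∫ t in p..q, (F' (θ t) - F' (θ p)) * g t := by
        rw [← hp, ← hq]
        rw [intervalIntegral.integral_sub (hF'c.intervalIntegrable _ _)
          intervalIntegrable_const]
        have : ∫ t in p..q, (F' (θ t) - F' (θ p)) * g t
            = (∫ t in p..q, F' (θ t) * g t) - ∫ t in p..q, F' (θ p) * g t := by
          rw [← intervalIntegral.integral_sub (hint p q)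
            ((locInt.intervalIntegrable hLI p q).const_mul _)]
          congr 1; funext t; ring
        rw [this, intervalIntegral.integral_const, intervalIntegral.integral_const_mul,
          ← hFTCpq]
        ring_nf
      rw [hId]
      calc |(∫ u in (θ p)..(θ q), (F' u - F' (θ p)))
            - ∫ t in p..q, (F' (θ t) - F' (θ p)) * g t|
          ≤ |∫ u in (θ p)..(θ q), (F' u - F' (θ p))|
            + |∫ t in p..q, (F' (θ t) - F' (θ p)) * g t| := abs_sub _ _
        _ ≤ ε * (∫ t in p..q, |g t|) + ε * ∫ t in p..q, |g t| := add_le_add hA1 hA2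
        _ = ε * (2 * ∫ t in p..q, |g t|) := by ring
    -- sum up
    calc |L - R| = |∑ i ∈ Finset.range n,
        ((∫ u in (θ (x i))..(θ (x (i+1))), F' u) - ∫ t in (x i)..(x (i+1)), F' (θ t) * g t)| := by
          rw [hLsum, hRsum, Finset.sum_sub_distrib]
      _ ≤ ∑ i ∈ Finset.range n,
          |(∫ u in (θ (x i))..(θ (x (i+1))), F' u) - ∫ t in (x i)..(x (i+1)), F' (θ t) * g t| :=
          Finset.abs_sum_le_sum_abs _ _
      _ ≤ ∑ i ∈ Finset.range n, ε * (2 * ∫ t in (x i)..(x (i+1)), |g t|) := by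
          refine Finset.sum_le_sum ?_
          intro i hi
          exact hpiece i (Finset.mem_range.1 hi)
      _ = (ε * 2) * ∑ i ∈ Finset.range n, ∫ t in (x i)..(x (i+1)), |g t| := by
          rw [Finset.mul_sum]
          exact Finset.sum_congr rfl fun i _ => by ring
      _ = ε * (2 * C) := by rw [hCsum]; ring
  -- conclude
  have habs0 : |L - R| ≤ 0 := by
    refine le_of_forall_pos_le_add ?_
    intro ε hε
    have := key (ε / (2 * C + 1)) (by positivity)
    calc |L - R| ≤ (ε / (2*C+1)) * (2 * C) := this
    _ ≤ ε := by
      rw [div_mul_eq_mul_div, div_le_iff₀ (by positivity)]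
      nlinarith
    _ ≤ 0 + ε := by linarith
  have hLR : L - R = 0 := abs_nonpos_iff.1 habs0
  linarith


lemma integral_ind (c₁ c₂ : ℝ) (hc : c₁ < c₂) (u : ℝ) :
    ∫ s in c₁..u, (Ioo c₁ c₂).indicator (fun _ => (1:ℝ)) s = max c₁ (min u c₂) - c₁ := by
  rcases lt_or_ge u c₁ with hu | hu
  · rw [intervalIntegral.integral_of_ge hu.le]
    have h0 : EqOn ((Ioo c₁ c₂).indicator (fun _ => (1:ℝ))) (fun _ => 0) (Ioc u c₁) := by
      intro s hs
      simp only [indicator_apply_eq_zero, mem_Ioo]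
      intro hmem; exact absurd hmem.1 (not_lt.2 hs.2)
    rw [setIntegral_congr_fun measurableSet_Ioc h0]
    rw [min_eq_left (hu.trans hc).le, max_eq_left hu.le]
    simp
  · rw [intervalIntegral.integral_of_le hu, MeasureTheory.integral_indicator measurableSet_Ioo,
      Measure.restrict_restrict measurableSet_Ioo, setIntegral_const]
    rcases lt_or_ge u c₂ with hu2 | hu2
    · have hset : Ioo c₁ c₂ ∩ Ioc c₁ u = Ioc c₁ u := by
        ext s
        simp only [mem_inter_iff, mem_Ioo, mem_Ioc]
        exact ⟨fun hs => hs.2, fun hs => ⟨⟨hs.1, lt_of_le_of_lt hs.2 hu2⟩, hs⟩⟩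
      rw [hset, Real.volume_real_Ioc_of_le (by linarith)]
      rw [min_eq_left hu2.le, max_eq_right hu]
      simp
    · have hset : Ioo c₁ c₂ ∩ Ioc c₁ u = Ioo c₁ c₂ := by
        ext s
        simp only [mem_inter_iff, mem_Ioo, mem_Ioc]
        exact ⟨fun hs => hs.1, fun hs => ⟨hs, hs.1, by linarith [hs.2]⟩⟩
      rw [hset, Real.volume_real_Ioo_of_le (by linarith)]
      rw [min_eq_right hu2, max_eq_right hc.le]
      simp


lemma aux_subst (θ : ℝ → ℝ) (hθc : Continuous θ) (hLI : LocallyIntegrable (deriv θ) volume)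
    (hFTC : ∀ a b : ℝ, θ b - θ a = ∫ t in a..b, deriv θ t)
    (F' : ℝ → ℝ) (hF'c : Continuous F') (a b : ℝ) :
    (∫ s in (θ a)..(θ b), F' s) = ∫ t in a..b, F' (θ t) * deriv θ t := by
  rcases le_total a b with hab | hab
  · exact aux_subst_le θ hθc hLI hFTC F' hF'c a b hab
  · have := aux_subst_le θ hθc hLI hFTC F' hF'c b a hab
    rw [intervalIntegral.integral_symm, this, intervalIntegral.integral_symm b a]

/-- mollified indicator of `Ioo c₁ c₂`. -/
noncomputable def mInd (c₁ c₂ : ℝ) (n : ℕ) (s : ℝ) : ℝ :=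
  max 0 (min 1 (min ((s - c₁) * (n+1)) ((c₂ - s) * (n+1))))

lemma mInd_continuous (c₁ c₂ : ℝ) (n : ℕ) : Continuous (mInd c₁ c₂ n) := by
  unfold mInd
  fun_prop

lemma mInd_nonneg (c₁ c₂ : ℝ) (n : ℕ) (s : ℝ) : 0 ≤ mInd c₁ c₂ n s := le_max_left _ _

lemma mInd_le_one (c₁ c₂ : ℝ) (n : ℕ) (s : ℝ) : mInd c₁ c₂ n s ≤ 1 :=
  max_le zero_le_one (min_le_left _ _)

lemma mInd_tendsto (c₁ c₂ : ℝ) (hc : c₁ < c₂) (s : ℝ) :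
    Tendsto (fun n => mInd c₁ c₂ n s) atTop (𝓝 ((Ioo c₁ c₂).indicator (fun _ => (1:ℝ)) s)) := by
  by_cases hs : s ∈ Ioo c₁ c₂
  · rw [indicator_of_mem hs]
    have h1 : 0 < s - c₁ := by linarith [hs.1]
    have h2 : 0 < c₂ - s := by linarith [hs.2]
    obtain ⟨N1, hN1⟩ := exists_nat_gt (1 / (s - c₁))
    obtain ⟨N2, hN2⟩ := exists_nat_gt (1 / (c₂ - s))
    apply tendsto_atTop_of_eventually_const (i₀ := max N1 N2)
    intro n hn
    have hn1 : (N1 : ℝ) ≤ n := by exact_mod_cast (le_max_left N1 N2).trans hn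
    have hn2 : (N2 : ℝ) ≤ n := by exact_mod_cast (le_max_right N1 N2).trans hn
    have e1 : (1:ℝ) ≤ (s - c₁) * (n+1) := by
      rw [div_lt_iff₀ h1] at hN1; nlinarith
    have e2 : (1:ℝ) ≤ (c₂ - s) * (n+1) := by
      rw [div_lt_iff₀ h2] at hN2; nlinarith
    unfold mInd
    show 0 ⊔ 1 ⊓ ((s - c₁) * (↑n + 1) ⊓ (c₂ - s) * (↑n + 1)) = 1
    rw [min_eq_left (le_min e1 e2), max_eq_right zero_le_one]
  · rw [indicator_of_notMem hs]
    have : ∀ n : ℕ, mInd c₁ c₂ n s = 0 := by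
      intro n
      rcases not_and_or.1 (fun hm => hs ⟨hm.1, hm.2⟩) with h1 | h1
      · push_neg at h1
        have : (s - c₁) * (n+1) ≤ 0 := mul_nonpos_of_nonpos_of_nonneg (by linarith) (by positivity)
        unfold mInd
        rw [max_eq_left]
        exact le_trans (min_le_right _ _) (le_trans (min_le_left _ _) this)
      · push_neg at h1
        have : (c₂ - s) * (n+1) ≤ 0 := mul_nonpos_of_nonpos_of_nonneg (by linarith) (by positivity)
        unfold mInd
        rw [max_eq_left]
        exact le_trans (min_le_right _ _) (le_trans (min_le_right _ _) this)
    simp only [this]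
    exact tendsto_const_nhds

lemma ind_intervalIntegrable (c₁ c₂ : ℝ) (p q : ℝ) :
    IntervalIntegrable ((Ioo c₁ c₂).indicator (fun _ => (1:ℝ))) volume p q := by
  rw [intervalIntegrable_iff]
  exact (integrableOn_const measure_Ioc_lt_top.ne).indicator measurableSet_Ioo

lemma truncFTC (c₁ c₂ : ℝ) (hc : c₁ < c₂) (θ : ℝ → ℝ) (hθc : Continuous θ)
    (hLI : LocallyIntegrable (deriv θ) volume)
    (hFTC : ∀ a b : ℝ, θ b - θ a = ∫ t in a..b, deriv θ t) (a b : ℝ) :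
    max c₁ (min (θ b) c₂) - max c₁ (min (θ a) c₂)
      = ∫ t in a..b, (Ioo c₁ c₂).indicator (fun _ => (1:ℝ)) (θ t) * deriv θ t := by
  have hsubst : ∀ n : ℕ, (∫ s in (θ a)..(θ b), mInd c₁ c₂ n s)
      = ∫ t in a..b, mInd c₁ c₂ n (θ t) * deriv θ t :=
    fun n => aux_subst θ hθc hLI hFTC _ (mInd_continuous c₁ c₂ n) a b
  -- convergence of primitives of the mollified indicator
  have hT : ∀ u : ℝ, Tendsto (fun n => ∫ s in c₁..u, mInd c₁ c₂ n s) atTop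
      (𝓝 (max c₁ (min u c₂) - c₁)) := by
    intro u
    rw [← integral_ind c₁ c₂ hc u]
    apply intervalIntegral.tendsto_integral_filter_of_dominated_convergence (fun _ => (1:ℝ))
    · exact Eventually.of_forall fun n =>
        (mInd_continuous c₁ c₂ n).aestronglyMeasurable.restrict
    · refine Eventually.of_forall fun n => Eventually.of_forall fun s _ => ?_
      rw [Real.norm_eq_abs, abs_of_nonneg (mInd_nonneg _ _ _ _)]
      exact mInd_le_one _ _ _ _
    · exact intervalIntegrable_const
    · exact Eventually.of_forall fun s _ => mInd_tendsto c₁ c₂ hc s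
  have hLHS : Tendsto (fun n => ∫ s in (θ a)..(θ b), mInd c₁ c₂ n s) atTop
      (𝓝 (max c₁ (min (θ b) c₂) - max c₁ (min (θ a) c₂))) := by
    have hsplit : ∀ n : ℕ, (∫ s in (θ a)..(θ b), mInd c₁ c₂ n s)
        = (∫ s in c₁..(θ b), mInd c₁ c₂ n s) - ∫ s in c₁..(θ a), mInd c₁ c₂ n s := by
      intro n
      rw [intervalIntegral.integral_interval_sub_left
        ((mInd_continuous c₁ c₂ n).intervalIntegrable _ _)
        ((mInd_continuous c₁ c₂ n).intervalIntegrable _ _)]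
    simp only [hsplit]
    have := (hT (θ b)).sub (hT (θ a))
    convert this using 2
    ring
  have hRHS : Tendsto (fun n => ∫ t in a..b, mInd c₁ c₂ n (θ t) * deriv θ t) atTop
      (𝓝 (∫ t in a..b, (Ioo c₁ c₂).indicator (fun _ => (1:ℝ)) (θ t) * deriv θ t)) := by
    apply intervalIntegral.tendsto_integral_filter_of_dominated_convergence
      (fun t => |deriv θ t|)
    · exact Eventually.of_forall fun n =>
        (((mInd_continuous c₁ c₂ n).comp hθc).aestronglyMeasurable.mul
          (measurable_deriv θ).aestronglyMeasurable).restrict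
    · refine Eventually.of_forall fun n => Eventually.of_forall fun t _ => ?_
      rw [Real.norm_eq_abs, abs_mul]
      calc |mInd c₁ c₂ n (θ t)| * |deriv θ t| ≤ 1 * |deriv θ t| := by
            apply mul_le_mul_of_nonneg_right _ (abs_nonneg _)
            rw [abs_of_nonneg (mInd_nonneg _ _ _ _)]
            exact mInd_le_one _ _ _ _
        _ = |deriv θ t| := one_mul _
    · exact (locInt.intervalIntegrable hLI a b).abs
    · exact Eventually.of_forall fun t _ =>
        (mInd_tendsto c₁ c₂ hc (θ t)).mul_const (deriv θ t)
  simp only [hsubst] at hLHS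
  exact tendsto_nhds_unique hLHS hRHS


lemma deriv_clamp_level (c₁ c₂ c : ℝ) (θ : ℝ → ℝ) (x : ℝ) (hθx : θ x = c)
    (hacc : (𝓝[{y | θ y = c} \ {x}] x).NeBot) :
    deriv (fun y => max c₁ (min (θ y) c₂)) x = 0 := by
  set φ := fun y => max c₁ (min (θ y) c₂) with hφ
  by_cases hd : DifferentiableAt ℝ φ x
  · have hslope : Tendsto (slope φ x) (𝓝[≠] x) (𝓝 (deriv φ x)) :=
      hasDerivAt_iff_tendsto_slope.1 hd.hasDerivAt
    have hmono : 𝓝[{y | θ y = c} \ {x}] x ≤ 𝓝[≠] x :=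
      nhdsWithin_mono x (fun y hy => hy.2)
    have h1 : Tendsto (slope φ x) (𝓝[{y | θ y = c} \ {x}] x) (𝓝 (deriv φ x)) :=
      hslope.mono_left hmono
    have h2 : slope φ x =ᶠ[𝓝[{y | θ y = c} \ {x}] x] (fun _ => 0) := by
      filter_upwards [self_mem_nhdsWithin] with y hy
      have : φ y = φ x := by
        simp only [hφ]
        rw [show θ y = c from hy.1, hθx]
      rw [slope_def_field, this, sub_self, zero_div]
    have h3 : Tendsto (fun _ : ℝ => (0:ℝ)) (𝓝[{y | θ y = c} \ {x}] x) (𝓝 (deriv φ x)) :=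
      h1.congr' h2
    exact tendsto_nhds_unique h3 tendsto_const_nhds
  · exact deriv_zero_of_not_differentiableAt hd

lemma deriv_clamp_ae (c₁ c₂ : ℝ) (hc : c₁ < c₂) (θ : ℝ → ℝ) (hθc : Continuous θ) :
    ∀ᵐ x : ℝ, deriv (fun y => max c₁ (min (θ y) c₂)) x
      = (Ioo c₁ c₂).indicator (fun _ => (1:ℝ)) (θ x) * deriv θ x := by
  have hm1 : MeasurableSet {y : ℝ | θ y = c₁} := (isClosed_eq hθc continuous_const).measurableSet
  have hm2 : MeasurableSet {y : ℝ | θ y = c₂} := (isClosed_eq hθc continuous_const).measurableSet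
  filter_upwards [aux_acc _ hm1, aux_acc _ hm2] with x hacc1 hacc2
  rcases lt_trichotomy (θ x) c₁ with h1 | h1 | h1
  · -- below: locally constant c₁
    have hev : (fun y => max c₁ (min (θ y) c₂)) =ᶠ[𝓝 x] (fun _ => c₁) := by
      have : ∀ᶠ y in 𝓝 x, θ y < c₁ := hθc.continuousAt.eventually_lt continuousAt_const h1
      filter_upwards [this] with y hy
      rw [min_eq_left (by linarith), max_eq_left (by linarith)]
    rw [hev.deriv_eq, deriv_const]
    rw [indicator_of_notMem (by simp [mem_Ioo]; intro hlt; linarith), zero_mul]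
  · -- boundary c₁
    rw [deriv_clamp_level c₁ c₂ c₁ θ x h1 (hacc1 h1)]
    rw [indicator_of_notMem (by simp [mem_Ioo, h1]), zero_mul]
  rcases lt_trichotomy (θ x) c₂ with h2 | h2 | h2
  · -- middle
    have hev : (fun y => max c₁ (min (θ y) c₂)) =ᶠ[𝓝 x] θ := by
      have ha : ∀ᶠ y in 𝓝 x, c₁ < θ y := continuousAt_const.eventually_lt hθc.continuousAt h1
      have hb : ∀ᶠ y in 𝓝 x, θ y < c₂ := hθc.continuousAt.eventually_lt continuousAt_const h2
      filter_upwards [ha, hb] with y hy1 hy2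
      rw [min_eq_left hy2.le, max_eq_right hy1.le]
    rw [hev.deriv_eq]
    rw [indicator_of_mem (show θ x ∈ Ioo c₁ c₂ from ⟨h1, h2⟩), one_mul]
  · -- boundary c₂
    rw [deriv_clamp_level c₁ c₂ c₂ θ x h2 (hacc2 h2)]
    rw [indicator_of_notMem (by simp [mem_Ioo, h2]), zero_mul]
  · -- above
    have hev : (fun y => max c₁ (min (θ y) c₂)) =ᶠ[𝓝 x] (fun _ => c₂) := by
      have : ∀ᶠ y in 𝓝 x, c₂ < θ y := continuousAt_const.eventually_lt hθc.continuousAt h2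
      filter_upwards [this] with y hy
      rw [min_eq_right (by linarith), max_eq_right (by linarith)]
    rw [hev.deriv_eq, deriv_const]
    rw [indicator_of_notMem (by simp [mem_Ioo]; intro hlt; linarith), zero_mul]


/-- truncation step: truncating a `[0,π]`-valued admissible profile to
`[θ_h, π - θ_h]` does not increase the energy, and strictly decreases it unless the
profile already takes values in `[θ_h, π - θ_h]`. -/
theorem truncation_step (ν h : ℝ) (hν : 0 < ν) (hh : h ∈ Set.Ico (0 : ℝ) 1)
    (η : ℝ → ℝ) (hη : IsEta h η) (θ : ℝ → ℝ) (hθ : Admissible h η θ)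
    (hrange : ∀ x : ℝ, θ x ∈ Set.Icc 0 Real.pi)
    (hfin : neelEnergy ν h θ < ⊤)
    (θt : ℝ → ℝ)
    (hθt : ∀ x : ℝ, θt x = max (Real.arcsin h) (min (θ x) (Real.pi - Real.arcsin h))) :
    Admissible h η θt ∧ neelEnergy ν h θt ≤ neelEnergy ν h θ ∧
      (¬ (∀ x : ℝ, θ x ∈ Set.Icc (Real.arcsin h) (Real.pi - Real.arcsin h)) →
        neelEnergy ν h θt < neelEnergy ν h θ) := by
  have hθteq : θt = fun x => max (arcsin h) (min (θ x) (π - arcsin h)) := funext hθt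
  subst hθteq
  obtain ⟨⟨hLI, hFTC⟩, hL2, hDL2⟩ := hθ
  obtain ⟨hc10, hc1half, hsin1⟩ := arcsin_facts hh
  have hpi := Real.pi_pos
  set c₁ := arcsin h with hc₁def
  set c₂ := π - arcsin h with hc₂def
  have hc : c₁ < c₂ := by rw [hc₁def, hc₂def]; linarith
  have hθc : Continuous θ := aux_cont θ hLI hFTC
  have hθtc : Continuous fun x => max c₁ (min (θ x) c₂) :=
    continuous_const.max (hθc.min continuous_const)
  set u : ℝ → ℝ := fun t => (Ioo c₁ c₂).indicator (fun _ => (1:ℝ)) (θ t) * deriv θ t with hu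
  have hderiv : (deriv fun x => max c₁ (min (θ x) c₂)) =ᵐ[volume] u :=
    deriv_clamp_ae c₁ c₂ hc θ hθc
  have hu_le : ∀ t, |u t| ≤ |deriv θ t| := by
    intro t
    rw [hu, abs_mul]
    by_cases ht : θ t ∈ Ioo c₁ c₂
    · rw [indicator_of_mem ht]; simp
    · rw [indicator_of_notMem ht]; simp [abs_nonneg]
  have hdm : Measurable (deriv fun x => max c₁ (min (θ x) c₂)) := measurable_deriv _
  -- local integrability of the new derivative
  have hLI' : LocallyIntegrable (deriv fun x => max c₁ (min (θ x) c₂)) volume := by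
    rw [locallyIntegrable_iff]
    intro k hk
    refine MeasureTheory.Integrable.mono (hLI.integrableOn_isCompact hk)
      hdm.aestronglyMeasurable.restrict ?_
    refine ae_restrict_of_ae ?_
    filter_upwards [hderiv] with x hx
    rw [Real.norm_eq_abs, Real.norm_eq_abs, hx]
    exact hu_le x
  -- FTC for the truncation
  have hFTC' : ∀ a b : ℝ, (max c₁ (min (θ b) c₂)) - (max c₁ (min (θ a) c₂))
      = ∫ t in a..b, deriv (fun x => max c₁ (min (θ x) c₂)) t := by
    intro a b
    rw [truncFTC c₁ c₂ hc θ hθc hLI hFTC a b]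
    apply intervalIntegral.integral_congr_ae
    filter_upwards [hderiv] with x hx _
    exact hx.symm
  -- L² bounds
  have hD2' : MemLp (deriv fun x => max c₁ (min (θ x) c₂)) 2 volume := by
    refine hDL2.of_le hdm.aestronglyMeasurable ?_
    filter_upwards [hderiv] with x hx
    rw [Real.norm_eq_abs, Real.norm_eq_abs, hx]
    exact hu_le x
  have hηmem : ∀ x, η x ∈ Icc c₁ c₂ := by
    intro x
    obtain ⟨-, hmono, -, hleft, hright⟩ := hη
    constructor
    · have h2 : η (|x| + 2) ≤ η x := hmono (by linarith [le_abs_self x])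
      rw [hright (|x| + 2) (by linarith [abs_nonneg x])] at h2
      exact h2
    · have h2 : η x ≤ η (-(|x| + 2)) := hmono (by linarith [neg_abs_le x])
      rw [hleft (-(|x| + 2)) (by linarith [abs_nonneg x])] at h2
      exact h2
  have hsub_le : ∀ x, |max c₁ (min (θ x) c₂) - θ x| ≤ |θ x - η x| := by
    intro x
    rcases lt_trichotomy (θ x) c₁ with h1 | h1 | h1
    · rw [min_eq_left (by linarith), max_eq_left (by linarith)]
      rw [abs_of_nonneg (by linarith), abs_of_nonpos (by linarith [(hηmem x).1])]
      linarith [(hηmem x).1]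
    · rw [min_eq_left (by linarith), max_eq_left (by linarith), h1]
      simp [abs_nonneg]
    · rcases le_or_gt (θ x) c₂ with h2 | h2
      · rw [min_eq_left h2, max_eq_right (by linarith)]
        simp [abs_nonneg]
      · rw [min_eq_right h2.le, max_eq_right hc.le]
        rw [abs_of_nonpos (by linarith), abs_of_nonneg (by linarith [(hηmem x).2])]
        linarith [(hηmem x).2]
  have hL2' : MemLp (fun x => max c₁ (min (θ x) c₂) - η x) 2 volume := by
    have h1 : MemLp (fun x => max c₁ (min (θ x) c₂) - θ x) 2 volume := by
      refine hL2.of_le (hθtc.sub hθc).aestronglyMeasurable ?_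
      exact ae_of_all _ fun x => by
        rw [Real.norm_eq_abs, Real.norm_eq_abs]; exact hsub_le x
    have heq : (fun x => max c₁ (min (θ x) c₂) - η x)
        = fun x => (max c₁ (min (θ x) c₂) - θ x) + (θ x - η x) := by
      funext x; ring
    rw [heq]
    exact h1.add hL2
  have hAdm : Admissible h η (fun x => max c₁ (min (θ x) c₂)) := ⟨⟨hLI', hFTC'⟩, hL2', hD2'⟩
  -- pointwise energy comparisons
  have hsin_eq : ∀ x, Real.sin (max c₁ (min (θ x) c₂)) = max h (Real.sin (θ x)) :=
    fun x => sin_clamp hh (θ x) (hrange x)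
  have hP_le : ∀ x, (Real.sin (max c₁ (min (θ x) c₂)) - h)^2 ≤ (Real.sin (θ x) - h)^2 := by
    intro x
    rw [hsin_eq x]
    have : |max h (Real.sin (θ x)) - h| ≤ |Real.sin (θ x) - h| := by
      have := abs_max_sub_max_le_abs (Real.sin (θ x)) h h
      rwa [max_comm (Real.sin (θ x)) h, max_self] at this
    calc (max h (Real.sin (θ x)) - h)^2 = |max h (Real.sin (θ x)) - h|^2 := (sq_abs _).symm
      _ ≤ |Real.sin (θ x) - h|^2 := by exact pow_le_pow_left₀ (abs_nonneg _) this 2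
      _ = (Real.sin (θ x) - h)^2 := sq_abs _
  have hN_le : ∀ x y : ℝ, (Real.sin (max c₁ (min (θ x) c₂)) - Real.sin (max c₁ (min (θ y) c₂)))^2
      ≤ (Real.sin (θ x) - Real.sin (θ y))^2 := by
    intro x y
    rw [hsin_eq x, hsin_eq y]
    have : |max h (Real.sin (θ x)) - max h (Real.sin (θ y))| ≤ |Real.sin (θ x) - Real.sin (θ y)| := by
      have := abs_max_sub_max_le_abs (Real.sin (θ x)) (Real.sin (θ y)) h
      rwa [max_comm (Real.sin (θ x)) h, max_comm (Real.sin (θ y)) h] at this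
    calc (max h (Real.sin (θ x)) - max h (Real.sin (θ y)))^2
        = |max h (Real.sin (θ x)) - max h (Real.sin (θ y))|^2 := (sq_abs _).symm
      _ ≤ |Real.sin (θ x) - Real.sin (θ y)|^2 := by exact pow_le_pow_left₀ (abs_nonneg _) this 2
      _ = (Real.sin (θ x) - Real.sin (θ y))^2 := sq_abs _
  -- term-by-term inequalities
  have hT1 : (∫⁻ x : ℝ, ENNReal.ofReal ((deriv (fun x => max c₁ (min (θ x) c₂)) x) ^ 2))
      ≤ ∫⁻ x : ℝ, ENNReal.ofReal ((deriv θ x) ^ 2) := by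
    apply lintegral_mono_ae
    filter_upwards [hderiv] with x hx
    apply ENNReal.ofReal_le_ofReal
    rw [hx, ← sq_abs (u x), ← sq_abs (deriv θ x)]
    exact pow_le_pow_left₀ (abs_nonneg _) (hu_le x) 2
  have hT2 : (∫⁻ x : ℝ, ENNReal.ofReal ((Real.sin (max c₁ (min (θ x) c₂)) - h) ^ 2))
      ≤ ∫⁻ x : ℝ, ENNReal.ofReal ((Real.sin (θ x) - h) ^ 2) :=
    lintegral_mono fun x => ENNReal.ofReal_le_ofReal (hP_le x)
  have hT3 : (∫⁻ x : ℝ, ∫⁻ y : ℝ, ENNReal.ofReal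
        ((Real.sin (max c₁ (min (θ x) c₂)) - Real.sin (max c₁ (min (θ y) c₂))) ^ 2 / (x - y) ^ 2))
      ≤ ∫⁻ x : ℝ, ∫⁻ y : ℝ,
          ENNReal.ofReal ((Real.sin (θ x) - Real.sin (θ y)) ^ 2 / (x - y) ^ 2) := by
    refine lintegral_mono fun x => lintegral_mono fun y => ENNReal.ofReal_le_ofReal ?_
    rcases eq_or_lt_of_le (sq_nonneg (x - y)) with hz | hz
    · rw [← hz, div_zero, div_zero]
    · exact (div_le_div_iff_of_pos_right hz).2 (hN_le x y)
  have hE_le : neelEnergy ν h (fun x => max c₁ (min (θ x) c₂)) ≤ neelEnergy ν h θ := by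
    unfold neelEnergy
    exact add_le_add (add_le_add (ENNReal.div_le_div_right hT1 2)
      (ENNReal.div_le_div_right hT2 2)) (mul_le_mul_right hT3 _)
  refine ⟨hAdm, hE_le, ?_⟩
  -- strict inequality
  intro hne
  push_neg at hne
  obtain ⟨x₀, hx₀⟩ := hne
  -- finiteness of pieces of the energy of θ
  unfold neelEnergy at hfin ⊢
  set A := (∫⁻ x : ℝ, ENNReal.ofReal ((deriv θ x) ^ 2)) / 2 with hA
  set B := (∫⁻ x : ℝ, ENNReal.ofReal ((Real.sin (θ x) - h) ^ 2)) / 2 with hB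
  set C := ENNReal.ofReal (ν / (8 * Real.pi)) *
      ∫⁻ x : ℝ, ∫⁻ y : ℝ, ENNReal.ofReal ((Real.sin (θ x) - Real.sin (θ y)) ^ 2 / (x - y) ^ 2)
    with hC
  have hAfin : A ≠ ⊤ := by
    intro hcon
    rw [hcon] at hfin
    simp at hfin
  have hBfin : B ≠ ⊤ := by
    intro hcon
    rw [hcon] at hfin
    simp at hfin
  have hCfin : C ≠ ⊤ := by
    intro hcon
    rw [hcon] at hfin
    simp at hfin
  set A' := (∫⁻ x : ℝ, ENNReal.ofReal ((deriv (fun x => max c₁ (min (θ x) c₂)) x) ^ 2)) / 2 with hA'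
  set B' := (∫⁻ x : ℝ, ENNReal.ofReal ((Real.sin (max c₁ (min (θ x) c₂)) - h) ^ 2)) / 2 with hB'
  set C' := ENNReal.ofReal (ν / (8 * Real.pi)) *
      ∫⁻ x : ℝ, ∫⁻ y : ℝ, ENNReal.ofReal
        ((Real.sin (max c₁ (min (θ x) c₂)) - Real.sin (max c₁ (min (θ y) c₂))) ^ 2 / (x - y) ^ 2)
    with hC'
  have hA'A : A' ≤ A := ENNReal.div_le_div_right hT1 2
  have hC'C : C' ≤ C := mul_le_mul_right hT3 _
  -- strict inequality on the potential term
  have hBstrict : B' < B := by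
    have hx₀' : θ x₀ ∉ Icc c₁ c₂ := hx₀
    -- a ball around x₀ where θ avoids [c₁, c₂]
    have hO : IsOpen (θ ⁻¹' (Icc c₁ c₂)ᶜ) := (isOpen_compl_iff.2 isClosed_Icc).preimage hθc
    obtain ⟨r, hr0, hball⟩ := Metric.isOpen_iff.1 hO x₀ (by simpa using hx₀')
    have hcontP' : Continuous fun x => (Real.sin (max c₁ (min (θ x) c₂)) - h)^2 :=
      ((Real.continuous_sin.comp hθtc).sub continuous_const).pow 2
    have hcontP : Continuous fun x => (Real.sin (θ x) - h)^2 :=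
      ((Real.continuous_sin.comp hθc).sub continuous_const).pow 2
    set D := ∫⁻ x : ℝ, ENNReal.ofReal
        ((Real.sin (θ x) - h)^2 - (Real.sin (max c₁ (min (θ x) c₂)) - h)^2) with hD
    have hsplit : (∫⁻ x : ℝ, ENNReal.ofReal ((Real.sin (θ x) - h) ^ 2))
        = (∫⁻ x : ℝ, ENNReal.ofReal ((Real.sin (max c₁ (min (θ x) c₂)) - h) ^ 2)) + D := by
      rw [hD, ← lintegral_add_left hcontP'.measurable.ennreal_ofReal]
      refine lintegral_congr fun x => ?_
      rw [← ENNReal.ofReal_add (sq_nonneg _) (by linarith [hP_le x])]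
      congr 1
      ring
    have hXfin : (∫⁻ x : ℝ, ENNReal.ofReal ((Real.sin (θ x) - h) ^ 2)) ≠ ⊤ := by
      intro hcon
      apply hBfin
      rw [hB, hcon]
      exact ENNReal.top_div_of_ne_top (by norm_num)
    have hP'fin : (∫⁻ x : ℝ, ENNReal.ofReal ((Real.sin (max c₁ (min (θ x) c₂)) - h) ^ 2)) ≠ ⊤ :=
      ne_top_of_le_ne_top hXfin hT2
    have hD0 : D ≠ 0 := by
      have hsupp : Metric.ball x₀ r ⊆ Function.support fun x => ENNReal.ofReal
          ((Real.sin (θ x) - h)^2 - (Real.sin (max c₁ (min (θ x) c₂)) - h)^2) := by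
        intro x hx
        have hnot : θ x ∉ Icc c₁ c₂ := by simpa using hball hx
        have hslt : Real.sin (θ x) < h := sin_lt_of_not_mem hh (θ x) (hrange x) hnot
        have hP'0 : (Real.sin (max c₁ (min (θ x) c₂)) - h)^2 = 0 := by
          rw [hsin_eq x, max_eq_left hslt.le]
          ring
        rw [Function.mem_support, hP'0, sub_zero]
        have : (Real.sin (θ x) - h)^2 > 0 := by
          have : Real.sin (θ x) - h ≠ 0 := by linarith
          positivity
        exact (ENNReal.ofReal_pos.2 this).ne'
      have hpos : 0 < D := by
        have hmeas : Measurable fun x => ENNReal.ofReal ((Real.sin (θ x) - h)^2 - (Real.sin (max c₁ (min (θ x) c₂)) - h)^2) :=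
          (hcontP.sub hcontP').measurable.ennreal_ofReal
        rw [hD, lintegral_pos_iff_support hmeas]
        calc (0:ℝ≥0∞) < volume (Metric.ball x₀ r) := by
              rw [Real.volume_ball]
              exact ENNReal.ofReal_pos.2 (by linarith)
          _ ≤ _ := measure_mono hsupp
      exact hpos.ne'
    have hXlt : (∫⁻ x : ℝ, ENNReal.ofReal ((Real.sin (max c₁ (min (θ x) c₂)) - h) ^ 2))
        < ∫⁻ x : ℝ, ENNReal.ofReal ((Real.sin (θ x) - h) ^ 2) := by
      rw [hsplit]
      exact ENNReal.lt_add_right hP'fin hD0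
    rw [hB', hB, div_eq_mul_inv, div_eq_mul_inv]
    exact ENNReal.mul_lt_mul_left (ENNReal.inv_ne_zero.2 (by norm_num))
      (ENNReal.inv_ne_top.2 (by norm_num)) hXlt
  have hA'fin : A' ≠ ⊤ := ne_top_of_le_ne_top hAfin hA'A
  have hC'fin : C' ≠ ⊤ := ne_top_of_le_ne_top hCfin hC'C
  have step1 : A' + B' < A + B := ENNReal.add_lt_add_of_le_of_lt hA'fin hA'A hBstrict
  exact ENNReal.add_lt_add_of_lt_of_le hC'fin step1 hC'C
end

section
/- For all real numbers a, b, A, B such that (sin A + sin B)² < 4, one has (a·cos A + b·cos B)² / (4 − (sin A + sin B)²) ≤ (a² + b²)/2. -/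
/-- pointwise Cauchy–Schwarz-type inequality underlying the uniqueness
argument for Néel wall profiles. -/
theorem exchange_density_bound (a b A B : ℝ)
    (hAB : (Real.sin A + Real.sin B) ^ 2 < 4) :
    (a * Real.cos A + b * Real.cos B) ^ 2 / (4 - (Real.sin A + Real.sin B) ^ 2)
      ≤ (a ^ 2 + b ^ 2) / 2 := by
  have hD : 0 < 4 - (Real.sin A + Real.sin B) ^ 2 := by linarith
  rw [div_le_div_iff₀ hD (by norm_num)]
  have h1 := Real.sin_sq_add_cos_sq A
  have h2 := Real.sin_sq_add_cos_sq B
  nlinarith [sq_nonneg (a * Real.cos B - b * Real.cos A),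
    sq_nonneg (Real.sin A - Real.sin B), sq_nonneg a, sq_nonneg b,
    sq_nonneg (a - b), sq_nonneg (a + b)]
end

section
/- (Convolution decay.) Let β ∈ (0, 2) and c > 0, and let G, f : ℝ → ℝ be measurable functions with 0 ≤ G(x) ≤ c/(1 + x²) and |f(y)| ≤ c/(1 + |y|^β) for all x, y ∈ ℝ. Then there exists C > 0 (depending only on c and β) such that ∫_ℝ G(x − y)|f(y)| dy ≤ C/(1 + |x|^β) for every x ∈ ℝ. -/
open MeasureTheory Real Set

private lemma rpow_two_eq_sq (t : ℝ) (ht : 0 ≤ t) : t ^ (2 : ℝ) = t ^ 2 := by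
  rw [show (2 : ℝ) = ((2 : ℕ) : ℝ) by norm_num, Real.rpow_natCast]

/-- `|x|^β ≤ 1 + x^2` for `0 ≤ β ≤ 2`. -/
private lemma abs_rpow_le_one_add_sq (x β : ℝ) (hβ0 : 0 ≤ β) (hβ2 : β ≤ 2) :
    |x| ^ β ≤ 1 + x ^ 2 := by
  rcases le_or_gt |x| 1 with h | h
  · have := Real.rpow_le_one (abs_nonneg x) h hβ0
    nlinarith [sq_nonneg x]
  · have h1 : (1 : ℝ) ≤ |x| := h.le
    have := Real.rpow_le_rpow_of_exponent_le h1 hβ2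
    rw [rpow_two_eq_sq |x| (abs_nonneg x), sq_abs] at this
    nlinarith

/-- if `|y| ≤ |x|` then `|x|^β * y^2 ≤ x^2 * |y|^β` for `0 ≤ β ≤ 2`. -/
private lemma key_swap (x y β : ℝ) (hβ0 : 0 ≤ β) (hβ2 : β ≤ 2) (hyx : |y| ≤ |x|) :
    |x| ^ β * y ^ 2 ≤ x ^ 2 * |y| ^ β := by
  rcases eq_or_lt_of_le (abs_nonneg y) with hy | hy
  · have : y = 0 := abs_eq_zero.mp hy.symm
    subst this
    simp only [abs_zero, ne_eq]
    have h0 : (0:ℝ) ≤ (0:ℝ) ^ β := Real.rpow_nonneg le_rfl β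
    nlinarith [sq_nonneg x, Real.rpow_nonneg (abs_nonneg x) β]
  · have hx : (0 : ℝ) < |x| := lt_of_lt_of_le hy hyx
    have h1 : |y| ^ (2 : ℝ) = |y| ^ (2 - β) * |y| ^ β := by
      rw [← Real.rpow_add hy]; norm_num
    have h2 : |x| ^ β * |x| ^ (2 - β) = |x| ^ (2 : ℝ) := by
      rw [← Real.rpow_add hx]; ring_nf
    have hmono : |y| ^ (2 - β) ≤ |x| ^ (2 - β) :=
      Real.rpow_le_rpow (abs_nonneg y) hyx (by linarith)
    have hynn : (0 : ℝ) ≤ |y| ^ β := Real.rpow_nonneg (abs_nonneg y) β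
    have hxnn : (0 : ℝ) ≤ |x| ^ β := Real.rpow_nonneg (abs_nonneg x) β
    calc |x| ^ β * y ^ 2 = |x| ^ β * (|y| ^ (2 - β) * |y| ^ β) := by
          rw [← h1, rpow_two_eq_sq |y| (abs_nonneg y), sq_abs]
      _ ≤ |x| ^ β * (|x| ^ (2 - β) * |y| ^ β) := by
          apply mul_le_mul_of_nonneg_left _ hxnn
          exact mul_le_mul_of_nonneg_right hmono hynn
      _ = |x| ^ (2 : ℝ) * |y| ^ β := by rw [← h2]; ring
      _ = x ^ 2 * |y| ^ β := by rw [rpow_two_eq_sq |x| (abs_nonneg x), sq_abs]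

/-- if `|x|/2 ≤ |y|` then `|x|^β ≤ 4 * |y|^β` for `0 ≤ β ≤ 2`. -/
private lemma key_far (x y β : ℝ) (hβ0 : 0 ≤ β) (hβ2 : β ≤ 2) (hxy : |x| / 2 ≤ |y|) :
    |x| ^ β ≤ 4 * |y| ^ β := by
  have h24 : (2 : ℝ) ^ β ≤ 4 := by
    have h := Real.rpow_le_rpow_of_exponent_le (one_le_two (α := ℝ)) hβ2
    rw [rpow_two_eq_sq 2 (by norm_num)] at h
    norm_num at h
    linarith
  have h1 : (|x| / 2) ^ β ≤ |y| ^ β := Real.rpow_le_rpow (by positivity) hxy hβ0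
  have h2 : |x| ^ β = 2 ^ β * (|x| / 2) ^ β := by
    rw [← Real.mul_rpow (by norm_num) (by positivity)]
    congr 1
    ring
  have h3 : (0 : ℝ) ≤ (|x| / 2) ^ β := Real.rpow_nonneg (by positivity) β
  calc |x| ^ β = 2 ^ β * (|x| / 2) ^ β := h2
    _ ≤ 4 * (|x| / 2) ^ β := mul_le_mul_of_nonneg_right h24 h3
    _ ≤ 4 * |y| ^ β := by linarith

set_option maxHeartbeats 1000000 in
/-- convolution decay: convolving a kernel with quadratic decay against a
function with decay `|y|^{-β}`, `β ∈ (0,2)`, preserves the decay rate `|x|^{-β}`. -/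
theorem convolution_decay (β c : ℝ) (hβ : β ∈ Set.Ioo (0 : ℝ) 2) (hc : 0 < c)
    (G f : ℝ → ℝ) (hG : Measurable G) (hf : Measurable f)
    (hGb : ∀ x : ℝ, 0 ≤ G x ∧ G x ≤ c / (1 + x ^ 2))
    (hfb : ∀ y : ℝ, |f y| ≤ c / (1 + |y| ^ β)) :
    ∃ C : ℝ, 0 < C ∧ ∀ x : ℝ,
      (∫ y : ℝ, G (x - y) * |f y|) ≤ C / (1 + |x| ^ β) := by
  obtain ⟨hβ0, hβ2⟩ := hβ
  refine ⟨2 * π * (16 * c ^ 2), by positivity, fun x => ?_⟩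
  have hDnn : (0 : ℝ) ≤ |x| ^ β := Real.rpow_nonneg (abs_nonneg x) β
  have hD : (0 : ℝ) < 1 + |x| ^ β := by linarith
  -- integrability of the majorant
  have hint1 : Integrable (fun y : ℝ => (1 + (x - y) ^ 2)⁻¹) :=
    integrable_inv_one_add_sq.comp_sub_left x
  have hintsum : Integrable (fun y : ℝ => (1 + (x - y) ^ 2)⁻¹ + (1 + y ^ 2)⁻¹) :=
    hint1.add integrable_inv_one_add_sq
  have hmaj : Integrable (fun y : ℝ =>
      16 * c ^ 2 / (1 + |x| ^ β) * ((1 + (x - y) ^ 2)⁻¹ + (1 + y ^ 2)⁻¹)) :=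
    hintsum.const_mul _
  -- pointwise bound
  have hpt : ∀ y : ℝ, G (x - y) * |f y| ≤
      16 * c ^ 2 / (1 + |x| ^ β) * ((1 + (x - y) ^ 2)⁻¹ + (1 + y ^ 2)⁻¹) := by
    intro y
    have hEnn : (0 : ℝ) ≤ |y| ^ β := Real.rpow_nonneg (abs_nonneg y) β
    have hE : (0 : ℝ) < 1 + |y| ^ β := by linarith
    have hu : (0 : ℝ) < 1 + (x - y) ^ 2 := by positivity
    have hv : (0 : ℝ) < 1 + y ^ 2 := by positivity
    have step1 : G (x - y) * |f y| ≤ c / (1 + (x - y) ^ 2) * (c / (1 + |y| ^ β)) := by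
      apply mul_le_mul (hGb (x - y)).2 (hfb y) (abs_nonneg _) (by positivity)
    refine step1.trans ?_
    rcases le_or_gt (|x| / 2) |y| with h | h
    · -- far region: use the first kernel term
      have key : c * c * (1 + |x| ^ β) ≤ 16 * c ^ 2 * (1 + |y| ^ β) := by
        have := key_far x y β hβ0.le hβ2.le h
        nlinarith [sq_nonneg c]
      have h1 : c * c / (1 + |y| ^ β) ≤ 16 * c ^ 2 / (1 + |x| ^ β) := by
        rw [div_le_div_iff₀ hE hD]; linarith
      have h2 : c / (1 + (x - y) ^ 2) * (c / (1 + |y| ^ β))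
          = c * c / (1 + |y| ^ β) * (1 + (x - y) ^ 2)⁻¹ := by ring
      have h3 : c * c / (1 + |y| ^ β) * (1 + (x - y) ^ 2)⁻¹
          ≤ 16 * c ^ 2 / (1 + |x| ^ β) * (1 + (x - y) ^ 2)⁻¹ :=
        mul_le_mul_of_nonneg_right h1 (by positivity)
      have h4 : (0 : ℝ) ≤ 16 * c ^ 2 / (1 + |x| ^ β) * (1 + y ^ 2)⁻¹ := by positivity
      calc c / (1 + (x - y) ^ 2) * (c / (1 + |y| ^ β))
          = c * c / (1 + |y| ^ β) * (1 + (x - y) ^ 2)⁻¹ := h2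
        _ ≤ 16 * c ^ 2 / (1 + |x| ^ β) * (1 + (x - y) ^ 2)⁻¹ := h3
        _ ≤ 16 * c ^ 2 / (1 + |x| ^ β) * ((1 + (x - y) ^ 2)⁻¹ + (1 + y ^ 2)⁻¹) :=
            mul_le_mul_of_nonneg_left (le_add_of_nonneg_right (inv_nonneg.mpr hv.le))
              (by positivity)
    · -- near region: use the second kernel term
      have hyx : |y| ≤ |x| := by
        have : (0 : ℝ) ≤ |x| := abs_nonneg x
        linarith
      have hsq : x ^ 2 / 4 ≤ (x - y) ^ 2 := by
        have habs : |x| - |y| ≤ |x - y| := abs_sub_abs_le_abs_sub x y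
        have h1 : |x| / 2 ≤ |x - y| := by linarith
        have h2 : (|x| / 2) ^ 2 ≤ |x - y| ^ 2 := by
          apply sq_le_sq' <;> nlinarith [abs_nonneg (x - y), abs_nonneg x]
        rw [sq_abs] at h2
        calc x ^ 2 / 4 = (|x| / 2) ^ 2 := by rw [div_pow, sq_abs]; ring
          _ ≤ (x - y) ^ 2 := h2
      have hy2 : y ^ 2 ≤ x ^ 2 / 4 := by
        have h2 : |y| ^ 2 ≤ (|x| / 2) ^ 2 := by
          apply sq_le_sq' <;> nlinarith [abs_nonneg y, abs_nonneg x]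
        rw [sq_abs] at h2
        calc y ^ 2 ≤ (|x| / 2) ^ 2 := h2
          _ = x ^ 2 / 4 := by rw [div_pow, sq_abs]; ring
      have hP : |x| ^ β ≤ 1 + x ^ 2 := abs_rpow_le_one_add_sq x β hβ0.le hβ2.le
      have hPQ : |x| ^ β * y ^ 2 ≤ x ^ 2 * |y| ^ β := key_swap x y β hβ0.le hβ2.le hyx
      have key : c * c * ((1 + |x| ^ β) * (1 + y ^ 2))
          ≤ 16 * c ^ 2 * ((1 + (x - y) ^ 2) * (1 + |y| ^ β)) := by
        nlinarith [sq_nonneg c, sq_nonneg x, sq_nonneg y, mul_nonneg (sq_nonneg c) hEnn,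
          mul_nonneg (sq_nonneg c) (sq_nonneg x),
          mul_nonneg (mul_nonneg (sq_nonneg c) (sq_nonneg x)) hEnn]
      have h1 : c * c / ((1 + (x - y) ^ 2) * (1 + |y| ^ β))
          ≤ 16 * c ^ 2 / ((1 + |x| ^ β) * (1 + y ^ 2)) := by
        rw [div_le_div_iff₀ (by positivity) (by positivity)]; nlinarith [key]
      have h2 : c / (1 + (x - y) ^ 2) * (c / (1 + |y| ^ β))
          = c * c / ((1 + (x - y) ^ 2) * (1 + |y| ^ β)) := div_mul_div_comm _ _ _ _
      have h3 : 16 * c ^ 2 / ((1 + |x| ^ β) * (1 + y ^ 2))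
          = 16 * c ^ 2 / (1 + |x| ^ β) * (1 + y ^ 2)⁻¹ := by
        rw [div_mul_eq_div_div, div_eq_mul_inv]
      calc c / (1 + (x - y) ^ 2) * (c / (1 + |y| ^ β))
          = c * c / ((1 + (x - y) ^ 2) * (1 + |y| ^ β)) := h2
        _ ≤ 16 * c ^ 2 / ((1 + |x| ^ β) * (1 + y ^ 2)) := h1
        _ = 16 * c ^ 2 / (1 + |x| ^ β) * (1 + y ^ 2)⁻¹ := h3
        _ ≤ 16 * c ^ 2 / (1 + |x| ^ β) * ((1 + (x - y) ^ 2)⁻¹ + (1 + y ^ 2)⁻¹) :=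
            mul_le_mul_of_nonneg_left (le_add_of_nonneg_left (inv_nonneg.mpr hu.le))
              (by positivity)
  -- integrate
  have hmono : (∫ y : ℝ, G (x - y) * |f y|)
      ≤ ∫ y : ℝ, 16 * c ^ 2 / (1 + |x| ^ β) * ((1 + (x - y) ^ 2)⁻¹ + (1 + y ^ 2)⁻¹) := by
    apply integral_mono_of_nonneg
    · exact Filter.Eventually.of_forall fun y => mul_nonneg (hGb (x - y)).1 (abs_nonneg _)
    · exact hmaj
    · exact Filter.Eventually.of_forall hpt
  refine hmono.trans ?_
  have hval : (∫ y : ℝ, 16 * c ^ 2 / (1 + |x| ^ β) * ((1 + (x - y) ^ 2)⁻¹ + (1 + y ^ 2)⁻¹))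
      = 16 * c ^ 2 / (1 + |x| ^ β) * (π + π) := by
    rw [integral_const_mul, integral_add hint1 integrable_inv_one_add_sq]
    rw [integral_sub_left_eq_self (fun y : ℝ => (1 + y ^ 2)⁻¹) volume x,
      integral_univ_inv_one_add_sq]
  rw [hval, div_mul_eq_mul_div]
  exact le_of_eq (by ring)
end
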